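/- Let n ≥ 3 and let C be a relative interaction matrix having star topology with center node 1, so that the first coordinate of F is F(x)_1 = ∑_{j=2}^n (x_j − x_j²) + x_1². Then for every x ∈ Δⁿ with all entries strictly positive, one has the strict Lyapunov-type increase F(x)_1 > x_1; equivalently, ∑_{j=2}^n x_j(1 − x_j) > x_1(1 − x_1) for every point x in the interior of Δⁿ with n ≥ 3. -/
import Mathlib


/-- The simplex Δⁿ = {x ∈ ℝⁿ : xᵢ ≥ 0, ∑ᵢ xᵢ = 1}. -/
def simplex (n : ℕ) : Set (Fin n → ℝ) :=
  {x | (∀ i, 0 ≤ x i) ∧ ∑ i, x i = 1}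

/-- The i-th vertex (standard basis vector) of the simplex. -/
def vertex (n : ℕ) (i : Fin n) : Fin n → ℝ := fun j => if j = i then 1 else 0

/-- A relative interaction matrix: nonnegative, row-stochastic, zero diagonal. -/
def IsRIM {n : ℕ} (C : Matrix (Fin n) (Fin n) ℝ) : Prop :=
  (∀ i j, 0 ≤ C i j) ∧ (∀ i, ∑ j, C i j = 1) ∧ (∀ i, C i i = 0)

/-- The single-timescale DeGroot–Friedkin map F(x) = Cᵀ(x − x²) + x². -/
noncomputable def DF {n : ℕ} (C : Matrix (Fin n) (Fin n) ℝ) (x : Fin n → ℝ) : Fin n → ℝ :=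
  fun i => ∑ j, C j i * (x j - (x j) ^ 2) + (x i) ^ 2

/-- C has star topology with center node c: C_{jc} = 1 and C_{cj} > 0 for all j ≠ c. -/
def StarCenter {n : ℕ} (C : Matrix (Fin n) (Fin n) ℝ) (c : Fin n) : Prop :=
  (∀ j, j ≠ c → C j c = 1) ∧ (∀ j, j ≠ c → 0 < C c j)

theorem stmt3 {n : ℕ} (hn : 3 ≤ n) (C : Matrix (Fin n) (Fin n) ℝ) (hC : IsRIM C)
    (hstar : StarCenter C ⟨0, by omega⟩)
    (x : Fin n → ℝ) (hx : x ∈ simplex n) (hpos : ∀ i, 0 < x i) :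
    x ⟨0, by omega⟩ < DF C x ⟨0, by omega⟩ ∧
      x ⟨0, by omega⟩ * (1 - x ⟨0, by omega⟩) <
        ∑ j ∈ Finset.univ.erase (⟨0, by omega⟩ : Fin n), x j * (1 - x j) := by
  obtain ⟨hx0, hx1⟩ := hx
  set c : Fin n := ⟨0, by omega⟩ with hc
  set S := Finset.univ.erase c with hS
  have hcard : 2 ≤ S.card := by
    have : S.card = n - 1 := by
      simp [hS, Finset.card_erase_of_mem, Finset.card_univ]
    omega
  have hSne : S.Nonempty := Finset.card_pos.mp (by omega)
  set s := ∑ j ∈ S, x j with hs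
  have hsum : s + x c = 1 := by
    rw [hs, hS, Finset.sum_erase_add _ _ (Finset.mem_univ c)]
    exact hx1
  have hlt : ∀ j ∈ S, x j < s := by
    intro j hj
    have hdecomp : s = x j + ∑ k ∈ S.erase j, x k := by
      rw [hs, ← Finset.add_sum_erase _ _ hj]
    have hpos' : 0 < ∑ k ∈ S.erase j, x k := by
      apply Finset.sum_pos (fun k _ => hpos k)
      rw [← Finset.card_pos, Finset.card_erase_of_mem hj]
      omega
    linarith
  have hkey : ∑ j ∈ S, (x j) ^ 2 < s ^ 2 := by
    have h1 : ∑ j ∈ S, (x j) ^ 2 < ∑ j ∈ S, x j * s := by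
      apply Finset.sum_lt_sum_of_nonempty hSne
      intro j hj
      have h := hlt j hj
      have h' := hpos j
      nlinarith
    have h2 : ∑ j ∈ S, x j * s = s ^ 2 := by
      rw [← Finset.sum_mul]; ring
    linarith
  have h3 : ∑ j, C j c * (x j - (x j) ^ 2) = ∑ j ∈ S, (x j - (x j) ^ 2) := by
    rw [← Finset.sum_erase_add Finset.univ (fun j => C j c * (x j - (x j) ^ 2))
      (Finset.mem_univ c)]
    rw [hC.2.2 c, zero_mul, add_zero]
    apply Finset.sum_congr rfl
    intro j hj
    rw [hstar.1 j (Finset.ne_of_mem_erase hj), one_mul]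
  have h4 : ∑ j ∈ S, (x j - (x j) ^ 2) = s - ∑ j ∈ S, (x j) ^ 2 := by
    rw [Finset.sum_sub_distrib]
  have h5 : ∑ j ∈ S, x j * (1 - x j) = s - ∑ j ∈ S, (x j) ^ 2 := by
    rw [← h4]
    apply Finset.sum_congr rfl
    intro j _
    ring
  constructor
  · show x c < DF C x c
    unfold DF
    rw [h3, h4]
    nlinarith
  · show x c * (1 - x c) < ∑ j ∈ S, x j * (1 - x j)
    rw [h5]
    have hxc : x c = 1 - s := by linarith
    have h6 : x c * (1 - x c) = s - s ^ 2 := by rw [hxc]; ring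
    linarith
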